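/- Suppose (Θ̂, Γ̂) is a local minimizer of Q₂(λ, ·, ·) and set Ω̂_jl^(k) = θ̂_jl Γ̂_jl^(k) for all j, l, k. Then for all 1 ≤ j, l ≤ p with j ≠ l: θ̂_jl = 0 if and only if Γ̂_jl^(k) = 0 for all k = 1, …, K. -/
import Mathlib


open scoped BigOperators
open Matrix

noncomputable section

namespace JF

/-- Frobenius norm of a real matrix. -/
def frobG {α β : Type*} [Fintype α] [Fintype β] (B : Matrix α β ℝ) : ℝ :=
  Real.sqrt (∑ a, ∑ b, B a b ^ 2)

/-- The `(j,l)` block (an `M × M` matrix) of a `pM × pM` matrix. -/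
def blk {p M : ℕ} (A : Matrix (Fin p × Fin M) (Fin p × Fin M) ℝ) (j l : Fin p) :
    Matrix (Fin M) (Fin M) ℝ := fun a b => A (j, a) (l, b)

/-- `M`-block version of the ℓ∞ matrix norm: `max_j Σ_l ‖A_{jl}‖_F`. -/
def blockInfty {p M : ℕ} (A : Matrix (Fin p × Fin M) (Fin p × Fin M) ℝ) : ℝ :=
  ⨆ j, ∑ l, frobG (blk A j l)

/-- `M`-block version of the max (elementwise ℓ∞) norm: `max_{j,l} ‖A_{jl}‖_F`. -/
def blockMax {p M : ℕ} (A : Matrix (Fin p × Fin M) (Fin p × Fin M) ℝ) : ℝ :=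
  ⨆ j, ⨆ l, frobG (blk A j l)

/-- `M`-block version of the ℓ₁ matrix norm: `max_l Σ_j ‖A_{jl}‖_F`. -/
def blockOne {p M : ℕ} (A : Matrix (Fin p × Fin M) (Fin p × Fin M) ℝ) : ℝ :=
  ⨆ l, ∑ j, frobG (blk A j l)

/-- Generalized block ℓ∞ norm, with block-rows/columns indexed by an arbitrary
finite type `ι` and blocks of shape `α × α`. -/
def bInftyG {ι α : Type*} [Fintype ι] [Fintype α] (A : Matrix (ι × α) (ι × α) ℝ) : ℝ :=
  ⨆ j, ∑ l, frobG (fun a b => A (j, a) (l, b))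

/-- Entrywise ℓ₁ norm of a matrix. -/
def ell1 {α β : Type*} [Fintype α] [Fintype β] (A : Matrix α β ℝ) : ℝ :=
  ∑ i, ∑ j, |A i j|

/-- `j`-th block of a vector in `ℝ^{pM}`. -/
def vblk {p M : ℕ} (u : Fin p × Fin M → ℝ) (j : Fin p) : Fin M → ℝ := fun a => u (j, a)

/-- Euclidean norm of a vector. -/
def vnorm2 {M : ℕ} (v : Fin M → ℝ) : ℝ := Real.sqrt (∑ a, v a ^ 2)

/-- Block max norm of a vector in `ℝ^{pM}`: `max_j ‖u_j‖_2`. -/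
def vBlockMax {p M : ℕ} (u : Fin p × Fin M → ℝ) : ℝ := ⨆ j, vnorm2 (vblk u j)

/-- `j`-th block of a `pM × M` vertically stacked block matrix. -/
def sblk {p M : ℕ} (x : Matrix (Fin p × Fin M) (Fin M) ℝ) (j : Fin p) :
    Matrix (Fin M) (Fin M) ℝ := fun a b => x (j, a) b

/-- `max_j ‖x_j‖_F` for a `pM × M` stacked block matrix. -/
def stackMax {p M : ℕ} (x : Matrix (Fin p × Fin M) (Fin M) ℝ) : ℝ :=
  ⨆ j, frobG (sblk x j)

/-- `Σ_j ‖x_j‖_F` for a `pM × M` stacked block matrix. -/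
def stackOne {p M : ℕ} (x : Matrix (Fin p × Fin M) (Fin M) ℝ) : ℝ :=
  ∑ j, frobG (sblk x j)

/-- The block matrix `Ω` with blocks `Ω_{jl} = θ_{jl} Γ_{jl}`. -/
def mkOmega {p M : ℕ} (Θ : Matrix (Fin p) (Fin p) ℝ)
    (G : Matrix (Fin p × Fin M) (Fin p × Fin M) ℝ) :
    Matrix (Fin p × Fin M) (Fin p × Fin M) ℝ :=
  fun x y => Θ x.1 y.1 * G x y

/-- Feasible parameters `(Θ, Γ)` for the joint functional graphical model:
`Θ` symmetric with nonnegative off-diagonal and positive diagonal entries,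
each `Γ^{(k)}` block-symmetric (`Γ_{lj} = Γ_{jl}ᵀ`), and every
`Ω^{(k)} = (θ_{jl} Γ^{(k)}_{jl})` symmetric positive definite. -/
def Feasible {p M K : ℕ} (Θ : Matrix (Fin p) (Fin p) ℝ)
    (Γ : Fin K → Matrix (Fin p × Fin M) (Fin p × Fin M) ℝ) : Prop :=
  Θ.IsSymm ∧ (∀ j l : Fin p, j ≠ l → 0 ≤ Θ j l) ∧ (∀ j : Fin p, 0 < Θ j j) ∧
    (∀ (k : Fin K) (j l : Fin p), blk (Γ k) l j = (blk (Γ k) j l)ᵀ) ∧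
    (∀ k : Fin K, (mkOmega Θ (Γ k)).PosDef)

/-- The negative log-likelihood part `Σ_k [tr(Σ̂^{(k)} Ω^{(k)}) − log det Ω^{(k)}]`. -/
def loss {p M K : ℕ}
    (Sig Ω : Fin K → Matrix (Fin p × Fin M) (Fin p × Fin M) ℝ) : ℝ :=
  ∑ k, (Matrix.trace (Sig k * Ω k) - Real.log (Ω k).det)

/-- `Σ_{j≠l} θ_{jl}`. -/
def pen1 {p : ℕ} (Θ : Matrix (Fin p) (Fin p) ℝ) : ℝ :=
  ∑ q ∈ (Finset.univ : Finset (Fin p)).offDiag, Θ q.1 q.2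

/-- `Σ_{j≠l} Σ_k ‖Γ^{(k)}_{jl}‖_F`. -/
def pen2 {p M K : ℕ} (Γ : Fin K → Matrix (Fin p × Fin M) (Fin p × Fin M) ℝ) : ℝ :=
  ∑ q ∈ (Finset.univ : Finset (Fin p)).offDiag, ∑ k, frobG (blk (Γ k) q.1 q.2)

/-- The objective `Q₁(λ₁, λ₂, Θ, Γ)`. -/
def Q1 {p M K : ℕ} (Sig : Fin K → Matrix (Fin p × Fin M) (Fin p × Fin M) ℝ)
    (l1 l2 : ℝ) (Θ : Matrix (Fin p) (Fin p) ℝ)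
    (Γ : Fin K → Matrix (Fin p × Fin M) (Fin p × Fin M) ℝ) : ℝ :=
  loss Sig (fun k => mkOmega Θ (Γ k)) + l1 * pen1 Θ + l2 * pen2 Γ

/-- The objective `Q₂(λ, Θ, Γ)`. -/
def Q2 {p M K : ℕ} (Sig : Fin K → Matrix (Fin p × Fin M) (Fin p × Fin M) ℝ)
    (lam : ℝ) (Θ : Matrix (Fin p) (Fin p) ℝ)
    (Γ : Fin K → Matrix (Fin p × Fin M) (Fin p × Fin M) ℝ) : ℝ :=
  loss Sig (fun k => mkOmega Θ (Γ k)) + pen1 Θ + lam * pen2 Γ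

/-- The objective `Q₃(λ, Ω)`. -/
def Q3 {p M K : ℕ} (Sig : Fin K → Matrix (Fin p × Fin M) (Fin p × Fin M) ℝ)
    (lam : ℝ) (Ω : Fin K → Matrix (Fin p × Fin M) (Fin p × Fin M) ℝ) : ℝ :=
  loss Sig Ω + lam * ∑ q ∈ (Finset.univ : Finset (Fin p)).offDiag,
    Real.sqrt (∑ k, frobG (blk (Ω k) q.1 q.2))

/-- The ℓ₁ distance `‖Θ − Θ'‖₁ + Σ_k ‖Γ^{(k)} − Γ'^{(k)}‖₁` between parameter pairs. -/
def paramDist {p M K : ℕ} (Θ Θ' : Matrix (Fin p) (Fin p) ℝ)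
    (Γ Γ' : Fin K → Matrix (Fin p × Fin M) (Fin p × Fin M) ℝ) : ℝ :=
  ell1 (Θ - Θ') + ∑ k, ell1 (Γ k - Γ' k)

/-- `(Θ̂, Γ̂)` is a local minimizer of `Q₁(λ₁, λ₂, ·, ·)` (parameters restricted to
`θ_{jj} = 1`). -/
def IsLocalMinQ1 {p M K : ℕ}
    (Sig : Fin K → Matrix (Fin p × Fin M) (Fin p × Fin M) ℝ)
    (l1 l2 : ℝ) (Θh : Matrix (Fin p) (Fin p) ℝ)
    (Γh : Fin K → Matrix (Fin p × Fin M) (Fin p × Fin M) ℝ) : Prop :=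
  (Feasible Θh Γh ∧ ∀ j, Θh j j = 1) ∧
    ∃ δ > 0, ∀ Θ Γ, Feasible Θ Γ → (∀ j, Θ j j = 1) →
      paramDist Θ Θh Γ Γh < δ → Q1 Sig l1 l2 Θh Γh ≤ Q1 Sig l1 l2 Θ Γ

/-- `(Θ̂, Γ̂)` is a local minimizer of `Q₂(λ, ·, ·)` over the full parameter space. -/
def IsLocalMinQ2 {p M K : ℕ}
    (Sig : Fin K → Matrix (Fin p × Fin M) (Fin p × Fin M) ℝ)
    (lam : ℝ) (Θh : Matrix (Fin p) (Fin p) ℝ)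
    (Γh : Fin K → Matrix (Fin p × Fin M) (Fin p × Fin M) ℝ) : Prop :=
  Feasible Θh Γh ∧
    ∃ δ > 0, ∀ Θ Γ, Feasible Θ Γ →
      paramDist Θ Θh Γ Γh < δ → Q2 Sig lam Θh Γh ≤ Q2 Sig lam Θ Γ

/-- `Ω̂` is a local minimizer of `Q₃(λ, ·)` over `K`-tuples of symmetric positive
definite matrices. -/
def IsLocalMinQ3 {p M K : ℕ}
    (Sig : Fin K → Matrix (Fin p × Fin M) (Fin p × Fin M) ℝ)
    (lam : ℝ) (Ωh : Fin K → Matrix (Fin p × Fin M) (Fin p × Fin M) ℝ) : Prop :=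
  (∀ k, (Ωh k).PosDef) ∧
    ∃ δ > 0, ∀ Ω : Fin K → Matrix (Fin p × Fin M) (Fin p × Fin M) ℝ,
      (∀ k, (Ω k).PosDef) →
      (∑ k, ell1 (Ω k - Ωh k)) < δ → Q3 Sig lam Ωh ≤ Q3 Sig lam Ω



lemma frobG_nonneg' {α β : Type*} [Fintype α] [Fintype β] (B : Matrix α β ℝ) : 0 ≤ frobG B :=
  Real.sqrt_nonneg _

lemma frobG_eq_zero' {α β : Type*} [Fintype α] [Fintype β] {B : Matrix α β ℝ}
    (h : frobG B = 0) : B = 0 := by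
  have h0 : (0:ℝ) ≤ ∑ a, ∑ b, B a b ^ 2 := by positivity
  have hs : (∑ a, ∑ b, B a b ^ 2) = 0 := le_antisymm (Real.sqrt_eq_zero'.mp h) h0
  ext a b
  have ha := (Finset.sum_eq_zero_iff_of_nonneg (fun a _ => by positivity)).mp hs a (Finset.mem_univ a)
  have hb := (Finset.sum_eq_zero_iff_of_nonneg (fun b _ => sq_nonneg _)).mp ha b (Finset.mem_univ b)
  simpa using (pow_eq_zero_iff two_ne_zero).mp hb

lemma frobG_const_mul {α β : Type*} [Fintype α] [Fintype β] {c : ℝ} (hc : 0 ≤ c)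
    (B : Matrix α β ℝ) : frobG (fun a b => c * B a b) = c * frobG B := by
  unfold frobG
  have h : (∑ a, ∑ b, (c * B a b) ^ 2) = c ^ 2 * ∑ a, ∑ b, B a b ^ 2 := by
    simp [mul_pow, Finset.mul_sum]
  rw [h, Real.sqrt_mul (sq_nonneg c), Real.sqrt_sq hc]

lemma ell1_nonneg' {α β : Type*} [Fintype α] [Fintype β] (A : Matrix α β ℝ) : 0 ≤ ell1 A := by
  unfold ell1; positivity

set_option maxHeartbeats 1000000

lemma sum_pair' {ι : Type*} [DecidableEq ι] {s : Finset ι} (g : ι → ℝ) {q1 q2 : ι}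
    (h1 : q1 ∈ s) (h2 : q2 ∈ s) (hne : q1 ≠ q2)
    (hz : ∀ q ∈ s, q ≠ q1 → q ≠ q2 → g q = 0) :
    ∑ q ∈ s, g q = g q1 + g q2 := by
  rw [← Finset.add_sum_erase s g h1]
  congr 1
  rw [Finset.sum_eq_single_of_mem q2 (Finset.mem_erase.mpr ⟨hne.symm, h2⟩)]
  intro q hq hq2
  exact hz q (Finset.mem_erase.mp hq).2 (Finset.mem_erase.mp hq).1 hq2

/-- Lemma 2, part 1. If `(Θ̂, Γ̂)` is a local minimizer of
`Q₂(λ, ·, ·)` then for off-diagonal `(j,l)`: `θ̂_{jl} = 0` iff `Γ̂^{(k)}_{jl} = 0`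
for all `k`. -/
theorem statement_4 {p M K : ℕ} (hp : 2 ≤ p) (hM : 1 ≤ M) (hK : 1 ≤ K)
    (lam : ℝ) (hlam : 0 < lam)
    (Sig : Fin K → Matrix (Fin p × Fin M) (Fin p × Fin M) ℝ)
    (hSig : ∀ k, (Sig k).IsSymm)
    (Θh : Matrix (Fin p) (Fin p) ℝ)
    (Γh : Fin K → Matrix (Fin p × Fin M) (Fin p × Fin M) ℝ)
    (h : IsLocalMinQ2 Sig lam Θh Γh) :
    ∀ j l : Fin p, j ≠ l →
      (Θh j l = 0 ↔ ∀ k : Fin K, blk (Γh k) j l = 0) := by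
  obtain ⟨⟨hsymm, hoff, hdiag, hbs, hpd⟩, δ, hδ, hmin⟩ := h
  intro j l hjl
  have hΘsymm : ∀ a b : Fin p, Θh a b = Θh b a := by
    intro a b
    have := congrFun (congrFun hsymm b) a
    simpa [Matrix.transpose_apply] using this
  set C : ℝ := ell1 Θh + ∑ k, ell1 (Γh k) with hCdef
  have hC0 : 0 ≤ C := by
    have h1 : 0 ≤ ell1 Θh := ell1_nonneg' _
    have h2 : 0 ≤ ∑ k, ell1 (Γh k) := Finset.sum_nonneg fun k _ => ell1_nonneg' _
    rw [hCdef]; linarith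
  set t : ℝ := min (1/2) (δ / (2 * (C + 1))) with htdef
  have ht0 : 0 < t := lt_min (by norm_num) (by positivity)
  have ht1 : t ≤ 1/2 := min_le_left _ _
  have htC : t * C < δ := by
    have h2 : t * (C + 1) ≤ (δ / (2 * (C + 1))) * (C + 1) :=
      mul_le_mul_of_nonneg_right (min_le_right _ _) (by linarith)
    have h3 : (δ / (2 * (C + 1))) * (C + 1) = δ / 2 := by
      field_simp
    nlinarith
  have hmemjl : ((j, l) : Fin p × Fin p) ∈ (Finset.univ : Finset (Fin p)).offDiag :=
    Finset.mem_offDiag.mpr ⟨Finset.mem_univ _, Finset.mem_univ _, hjl⟩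
  have hmemlj : ((l, j) : Fin p × Fin p) ∈ (Finset.univ : Finset (Fin p)).offDiag :=
    Finset.mem_offDiag.mpr ⟨Finset.mem_univ _, Finset.mem_univ _, hjl.symm⟩
  have hnepair : ((j, l) : Fin p × Fin p) ≠ (l, j) := fun hcontra =>
    hjl (congrArg Prod.fst hcontra)
  constructor
  · -- θ = 0 implies all Γ blocks vanish
    intro hθ k0
    have hθlj : Θh l j = 0 := (hΘsymm l j).trans hθ
    set Γ' : Fin K → Matrix (Fin p × Fin M) (Fin p × Fin M) ℝ :=
      fun k x y => if (x.1 = j ∧ y.1 = l) ∨ (x.1 = l ∧ y.1 = j) then (1 - t) * Γh k x y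
        else Γh k x y with hΓ'def
    have hΓ'app : ∀ (k : Fin K) (x y : Fin p × Fin M),
        Γ' k x y = if (x.1 = j ∧ y.1 = l) ∨ (x.1 = l ∧ y.1 = j) then (1 - t) * Γh k x y
          else Γh k x y := fun k x y => rfl
    have hOm : ∀ k, mkOmega Θh (Γ' k) = mkOmega Θh (Γh k) := by
      intro k; funext x y
      simp only [mkOmega, hΓ'app]
      by_cases hc : (x.1 = j ∧ y.1 = l) ∨ (x.1 = l ∧ y.1 = j)
      · rcases hc with ⟨h1, h2⟩ | ⟨h1, h2⟩
        · rw [if_pos (Or.inl ⟨h1, h2⟩), h1, h2, hθ]; ring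
        · rw [if_pos (Or.inr ⟨h1, h2⟩), h1, h2, hθlj]; ring
      · rw [if_neg hc]
    have hblkjl : ∀ k, frobG (blk (Γ' k) j l) = (1 - t) * frobG (blk (Γh k) j l) := by
      intro k
      have he : blk (Γ' k) j l = fun a b => (1 - t) * (blk (Γh k) j l) a b := by
        funext a b
        simp only [blk, hΓ'app]
        rw [if_pos (by tauto)]
      rw [he, frobG_const_mul (by linarith)]
    have hblklj : ∀ k, frobG (blk (Γ' k) l j) = (1 - t) * frobG (blk (Γh k) l j) := by
      intro k
      have he : blk (Γ' k) l j = fun a b => (1 - t) * (blk (Γh k) l j) a b := by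
        funext a b
        simp only [blk, hΓ'app]
        rw [if_pos (by tauto)]
      rw [he, frobG_const_mul (by linarith)]
    have hblkother : ∀ (k : Fin K) (q : Fin p × Fin p), q ≠ (j, l) → q ≠ (l, j) →
        blk (Γ' k) q.1 q.2 = blk (Γh k) q.1 q.2 := by
      intro k q hq1 hq2
      funext a b
      simp only [blk, hΓ'app]
      rw [if_neg]
      rintro (⟨h1, h2⟩ | ⟨h1, h2⟩)
      · exact hq1 (Prod.ext h1 h2)
      · exact hq2 (Prod.ext h1 h2)
    have hfeas' : Feasible Θh Γ' := by
      refine ⟨hsymm, hoff, hdiag, ?_, ?_⟩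
      · intro k j' l'
        funext a b
        have hbase : Γh k (l', a) (j', b) = Γh k (j', b) (l', a) := by
          have := congrFun (congrFun (hbs k j' l') a) b
          simpa [blk, Matrix.transpose_apply] using this
        simp only [blk, Matrix.transpose_apply, hΓ'app]
        by_cases hc : (l' = j ∧ j' = l) ∨ (l' = l ∧ j' = j)
        · rw [if_pos hc, if_pos (by tauto), hbase]
        · rw [if_neg hc, if_neg (by tauto), hbase]
      · intro k; rw [hOm k]; exact hpd k
    have hdist : paramDist Θh Θh Γ' Γh < δ := by
      have hθ0 : ell1 (Θh - Θh) = 0 := by simp [ell1]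
      have hk : ∀ k : Fin K, ell1 (Γ' k - Γh k) ≤ t * ell1 (Γh k) := by
        intro k
        unfold ell1
        rw [Finset.mul_sum]
        refine Finset.sum_le_sum fun x _ => ?_
        rw [Finset.mul_sum]
        refine Finset.sum_le_sum fun y _ => ?_
        simp only [Matrix.sub_apply, hΓ'app]
        by_cases hc : (x.1 = j ∧ y.1 = l) ∨ (x.1 = l ∧ y.1 = j)
        · rw [if_pos hc]
          have he : (1 - t) * Γh k x y - Γh k x y = -(t * Γh k x y) := by ring
          rw [he, abs_neg, abs_mul, abs_of_nonneg ht0.le]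
        · rw [if_neg hc]
          simp only [sub_self, abs_zero]
          positivity
      have hsum : ∑ k, ell1 (Γ' k - Γh k) ≤ t * ∑ k, ell1 (Γh k) := by
        rw [Finset.mul_sum]
        exact Finset.sum_le_sum fun k _ => hk k
      have hle : ∑ k, ell1 (Γh k) ≤ C := by
        have := ell1_nonneg' Θh
        rw [hCdef]; linarith
      have : t * ∑ k, ell1 (Γh k) ≤ t * C := by
        exact mul_le_mul_of_nonneg_left hle ht0.le
      unfold paramDist
      rw [hθ0]
      linarith
    set S : ℝ := (∑ k, frobG (blk (Γh k) j l)) + (∑ k, frobG (blk (Γh k) l j)) with hSdef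
    have hpen2 : pen2 Γ' = pen2 Γh - t * S := by
      unfold pen2
      have hsub : ∑ q ∈ (Finset.univ : Finset (Fin p)).offDiag,
          ((∑ k, frobG (blk (Γ' k) q.1 q.2)) - (∑ k, frobG (blk (Γh k) q.1 q.2)))
          = -(t * S) := by
        rw [sum_pair' _ hmemjl hmemlj hnepair]
        · have e1 : (∑ k, frobG (blk (Γ' k) j l)) = (1 - t) * ∑ k, frobG (blk (Γh k) j l) := by
            rw [Finset.mul_sum]
            exact Finset.sum_congr rfl fun k _ => hblkjl k
          have e2 : (∑ k, frobG (blk (Γ' k) l j)) = (1 - t) * ∑ k, frobG (blk (Γh k) l j) := by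
            rw [Finset.mul_sum]
            exact Finset.sum_congr rfl fun k _ => hblklj k
          simp only [e1, e2, hSdef]
          ring
        · intro q _ hq1 hq2
          have : ∀ k : Fin K, frobG (blk (Γ' k) q.1 q.2) = frobG (blk (Γh k) q.1 q.2) :=
            fun k => by rw [hblkother k q hq1 hq2]
          rw [Finset.sum_congr rfl fun k _ => this k]
          ring
      have := Finset.sum_sub_distrib (s := (Finset.univ : Finset (Fin p)).offDiag)
        (f := fun q => ∑ k, frobG (blk (Γ' k) q.1 q.2))
        (g := fun q => ∑ k, frobG (blk (Γh k) q.1 q.2))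
      rw [this] at hsub
      linarith
    have hQ := hmin Θh Γ' hfeas' hdist
    have hloss : loss Sig (fun k => mkOmega Θh (Γ' k)) = loss Sig (fun k => mkOmega Θh (Γh k)) := by
      unfold loss
      exact Finset.sum_congr rfl fun k _ => by simp only [hOm]
    unfold Q2 at hQ
    rw [hloss, hpen2] at hQ
    have hS0 : 0 ≤ S := by
      rw [hSdef]
      have h1 : 0 ≤ ∑ k, frobG (blk (Γh k) j l) := Finset.sum_nonneg fun k _ => frobG_nonneg' _
      have h2 : 0 ≤ ∑ k, frobG (blk (Γh k) l j) := Finset.sum_nonneg fun k _ => frobG_nonneg' _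
      linarith
    have hkey : lam * t * S ≤ 0 := by nlinarith [hQ]
    have hSle : S ≤ 0 := by
      by_contra hpos
      push_neg at hpos
      nlinarith [mul_pos (mul_pos hlam ht0) hpos]
    have hSzero : S = 0 := le_antisymm hSle hS0
    have hsum1 : (∑ k, frobG (blk (Γh k) j l)) = 0 := by
      have h1 : 0 ≤ ∑ k, frobG (blk (Γh k) j l) := Finset.sum_nonneg fun k _ => frobG_nonneg' _
      have h2 : 0 ≤ ∑ k, frobG (blk (Γh k) l j) := Finset.sum_nonneg fun k _ => frobG_nonneg' _
      rw [hSdef] at hSzero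
      linarith
    have := (Finset.sum_eq_zero_iff_of_nonneg (fun k _ => frobG_nonneg' (blk (Γh k) j l))).mp
      hsum1 k0 (Finset.mem_univ k0)
    exact frobG_eq_zero' this
  · -- all Γ blocks vanish implies θ = 0
    intro hΓ
    have hΓlj : ∀ k, blk (Γh k) l j = 0 := by
      intro k
      rw [hbs k j l, hΓ k]
      simp
    set Θ' : Matrix (Fin p) (Fin p) ℝ :=
      fun x y => if (x = j ∧ y = l) ∨ (x = l ∧ y = j) then (1 - t) * Θh x y else Θh x y
      with hΘ'def
    have hΘ'app : ∀ x y : Fin p,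
        Θ' x y = if (x = j ∧ y = l) ∨ (x = l ∧ y = j) then (1 - t) * Θh x y else Θh x y :=
      fun x y => rfl
    have hOm : ∀ k, mkOmega Θ' (Γh k) = mkOmega Θh (Γh k) := by
      intro k; funext x y
      simp only [mkOmega, hΘ'app]
      by_cases hc : (x.1 = j ∧ y.1 = l) ∨ (x.1 = l ∧ y.1 = j)
      · have hΓ0 : Γh k x y = 0 := by
          rcases hc with ⟨h1, h2⟩ | ⟨h1, h2⟩
          · have := congrFun (congrFun (hΓ k) x.2) y.2
            simpa [blk, ← h1, ← h2] using this
          · have := congrFun (congrFun (hΓlj k) x.2) y.2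
            simpa [blk, ← h1, ← h2] using this
        rw [hΓ0, mul_zero, mul_zero]
      · rw [if_neg hc]
    have hfeas' : Feasible Θ' Γh := by
      refine ⟨?_, ?_, ?_, hbs, ?_⟩
      · show Θ'ᵀ = Θ'
        funext a b
        simp only [Matrix.transpose_apply, hΘ'app]
        by_cases hc : (b = j ∧ a = l) ∨ (b = l ∧ a = j)
        · rw [if_pos hc, if_pos (by tauto), hΘsymm b a]
        · rw [if_neg hc, if_neg (by tauto), hΘsymm b a]
      · intro j' l' hne'
        rw [hΘ'app]
        by_cases hc : (j' = j ∧ l' = l) ∨ (j' = l ∧ l' = j)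
        · rw [if_pos hc]
          exact mul_nonneg (by linarith) (hoff j' l' hne')
        · rw [if_neg hc]; exact hoff j' l' hne'
      · intro a
        rw [hΘ'app, if_neg]
        · exact hdiag a
        · rintro (⟨h1, h2⟩ | ⟨h1, h2⟩)
          · exact hjl (h1.symm.trans h2)
          · exact hjl (h2.symm.trans h1)
      · intro k; rw [hOm k]; exact hpd k
    have hdist : paramDist Θ' Θh Γh Γh < δ := by
      have hγ0 : ∀ k : Fin K, ell1 (Γh k - Γh k) = 0 := fun k => by rw [sub_self]; simp [ell1]
      have hθle : ell1 (Θ' - Θh) ≤ t * ell1 Θh := by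
        unfold ell1
        rw [Finset.mul_sum]
        refine Finset.sum_le_sum fun x _ => ?_
        rw [Finset.mul_sum]
        refine Finset.sum_le_sum fun y _ => ?_
        simp only [Matrix.sub_apply, hΘ'app]
        by_cases hc : (x = j ∧ y = l) ∨ (x = l ∧ y = j)
        · rw [if_pos hc]
          have he : (1 - t) * Θh x y - Θh x y = -(t * Θh x y) := by ring
          rw [he, abs_neg, abs_mul, abs_of_nonneg ht0.le]
        · rw [if_neg hc]
          simp only [sub_self, abs_zero]
          positivity
      have hle : ell1 Θh ≤ C := by
        have : 0 ≤ ∑ k, ell1 (Γh k) := Finset.sum_nonneg fun k _ => ell1_nonneg' _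
        rw [hCdef]; linarith
      have h4 : t * ell1 Θh ≤ t * C := mul_le_mul_of_nonneg_left hle ht0.le
      unfold paramDist
      rw [Finset.sum_congr rfl fun k _ => hγ0 k]
      simp only [Finset.sum_const_zero]
      linarith
    have hpen1 : pen1 Θ' = pen1 Θh - t * (Θh j l + Θh l j) := by
      unfold pen1
      have hsub : ∑ q ∈ (Finset.univ : Finset (Fin p)).offDiag,
          (Θ' q.1 q.2 - Θh q.1 q.2) = -(t * (Θh j l + Θh l j)) := by
        rw [sum_pair' _ hmemjl hmemlj hnepair]
        · simp only [hΘ'app]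
          rw [if_pos (by tauto), if_pos (by tauto)]
          ring
        · intro q _ hq1 hq2
          rw [hΘ'app, if_neg]
          · ring
          · rintro (⟨h1, h2⟩ | ⟨h1, h2⟩)
            · exact hq1 (Prod.ext h1 h2)
            · exact hq2 (Prod.ext h1 h2)
      have := Finset.sum_sub_distrib (s := (Finset.univ : Finset (Fin p)).offDiag)
        (f := fun q : Fin p × Fin p => Θ' q.1 q.2)
        (g := fun q : Fin p × Fin p => Θh q.1 q.2)
      rw [this] at hsub
      linarith
    have hQ := hmin Θ' Γh hfeas' hdist
    have hloss : loss Sig (fun k => mkOmega Θ' (Γh k)) = loss Sig (fun k => mkOmega Θh (Γh k)) := by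
      unfold loss
      exact Finset.sum_congr rfl fun k _ => by simp only [hOm]
    unfold Q2 at hQ
    rw [hloss, hpen1] at hQ
    have hkey : t * (Θh j l + Θh l j) ≤ 0 := by linarith
    have hsum : Θh j l + Θh l j ≤ 0 := by
      by_contra hpos
      push_neg at hpos
      nlinarith [mul_pos ht0 hpos]
    have heq : Θh l j = Θh j l := hΘsymm l j
    have h0 : 0 ≤ Θh j l := hoff j l hjl
    linarith

end JF
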